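/- arXiv:math-ph/0110025 — 2 statements merged into one kernel-verified Lean document; each statement's English description precedes it below -/
import Mathlib

section
/- Detailed balance at equilibrium: if T_1 = T_n = T, then for every smooth function f : X → ℝ the identity e^{G/T} · J( L^T ( J( e^{−G/T} · f ) ) ) = L f holds, where e^{±G/T} denotes multiplication by the function e^{±G/T}. -/
open scoped BigOperators
open MeasureTheory

noncomputable section

namespace EP

/-- `d`-dimensional vectors. -/
abbrev Vec (d : ℕ) := Fin d → ℝ

/-- The phase space `X = (ℝ^d)^n × (ℝ^d)^n × (ℝ^d × ℝ^d)`,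
coordinates `x = (p, q, (r₁, rₙ))`. -/
abbrev Phase (d n : ℕ) := (Fin n → Vec d) × (Fin n → Vec d) × (Vec d × Vec d)

/-- Euclidean dot product on `ℝ^d`. -/
def dotp {d : ℕ} (a b : Vec d) : ℝ := ∑ j, a j * b j

/-- 1-based access to an `n`-tuple of vectors (defaults to `0` out of range;
all uses below are in range). -/
def nth {d n : ℕ} (v : Fin n → Vec d) (i : ℕ) : Vec d :=
  if h : 1 ≤ i ∧ i ≤ n then v ⟨i - 1, by omega⟩ else 0

/-- The coordinate direction `j` of the `i`-th (1-based) vector in `(ℝ^d)^n`. -/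
def basisQ (d n : ℕ) (i : ℕ) (j : Fin d) : Fin n → Vec d :=
  if h : 1 ≤ i ∧ i ≤ n then Pi.single (⟨i - 1, by omega⟩ : Fin n) (Pi.single j 1) else 0

/-- Coordinate direction in `X`: component `j` of `p_i`. -/
def eP (d n : ℕ) (i : ℕ) (j : Fin d) : Phase d n := (basisQ d n i j, 0, 0, 0)
/-- Coordinate direction in `X`: component `j` of `q_i`. -/
def eQ (d n : ℕ) (i : ℕ) (j : Fin d) : Phase d n := (0, basisQ d n i j, 0, 0)
/-- Coordinate direction in `X`: component `j` of `r₁`. -/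
def eR1 (d n : ℕ) (j : Fin d) : Phase d n := (0, 0, Pi.single j 1, 0)
/-- Coordinate direction in `X`: component `j` of `rₙ`. -/
def eRn (d n : ℕ) (j : Fin d) : Phase d n := (0, 0, 0, Pi.single j 1)

/-- First-order partial derivative of `f` in direction `v` at `x`. -/
def pd {d n : ℕ} (f : Phase d n → ℝ) (v x : Phase d n) : ℝ := fderiv ℝ f x v

/-- Second-order partial derivative of `f` in direction `v` at `x`. -/
def pd2 {d n : ℕ} (f : Phase d n → ℝ) (v x : Phase d n) : ℝ :=
  fderiv ℝ (fun y => fderiv ℝ f y v) x v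

/-- The potential `V(q) = Σ_{i=1}^n U¹(q_i) + Σ_{i=1}^{n-1} U²(q_i - q_{i+1})`. -/
def Vpot (d n : ℕ) (U1 U2 : Vec d → ℝ) (q : Fin n → Vec d) : ℝ :=
  (∑ i ∈ Finset.Icc 1 n, U1 (nth q i)) +
  (∑ i ∈ Finset.Icc 1 (n - 1), U2 (nth q i - nth q (i + 1)))

/-- `L₀ f = γ(T₁ Δ_{r₁} f + Tₙ Δ_{rₙ} f - r₁·∇_{r₁} f - rₙ·∇_{rₙ} f)`. -/
def gen0 (d n : ℕ) (ga T1 Tn : ℝ) (f : Phase d n → ℝ) (x : Phase d n) : ℝ :=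
  ga * (T1 * ∑ j, pd2 f (eR1 d n j) x + Tn * ∑ j, pd2 f (eRn d n j) x
      - ∑ j, x.2.2.1 j * pd f (eR1 d n j) x
      - ∑ j, x.2.2.2 j * pd f (eRn d n j) x)

/-- The first-order part
`L₁ f = λ(p₁·∇_{r₁} f + pₙ·∇_{rₙ} f - r₁·∇_{p₁} f - rₙ·∇_{pₙ} f)
  + (Σ p_i·∇_{q_i} f - Σ ∇_{q_i}V·∇_{p_i} f)`. -/
def gen1 (d n : ℕ) (U1 U2 : Vec d → ℝ) (lam : ℝ) (f : Phase d n → ℝ) (x : Phase d n) : ℝ :=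
  lam * ((∑ j, nth x.1 1 j * pd f (eR1 d n j) x)
       + (∑ j, nth x.1 n j * pd f (eRn d n j) x)
       - (∑ j, x.2.2.1 j * pd f (eP d n 1 j) x)
       - (∑ j, x.2.2.2 j * pd f (eP d n n j) x))
  + ((∑ i ∈ Finset.Icc 1 n, ∑ j, nth x.1 i j * pd f (eQ d n i j) x)
   - (∑ i ∈ Finset.Icc 1 n, ∑ j,
       fderiv ℝ (Vpot d n U1 U2) x.2.1 (basisQ d n i j) * pd f (eP d n i j) x))

/-- The generator `L = L₀ + L₁`. -/
def gen (d n : ℕ) (U1 U2 : Vec d → ℝ) (ga lam T1 Tn : ℝ)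
    (f : Phase d n → ℝ) (x : Phase d n) : ℝ :=
  gen0 d n ga T1 Tn f x + gen1 d n U1 U2 lam f x

/-- The formal adjoint `Lᵀ`. -/
def genT (d n : ℕ) (U1 U2 : Vec d → ℝ) (ga lam T1 Tn : ℝ)
    (g : Phase d n → ℝ) (x : Phase d n) : ℝ :=
  ga * (T1 * ∑ j, pd2 g (eR1 d n j) x + Tn * ∑ j, pd2 g (eRn d n j) x
      + ∑ j, x.2.2.1 j * pd g (eR1 d n j) x
      + ∑ j, x.2.2.2 j * pd g (eRn d n j) x
      + 2 * (d : ℝ) * g x)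
  - lam * ((∑ j, nth x.1 1 j * pd g (eR1 d n j) x)
         + (∑ j, nth x.1 n j * pd g (eRn d n j) x)
         - (∑ j, x.2.2.1 j * pd g (eP d n 1 j) x)
         - (∑ j, x.2.2.2 j * pd g (eP d n n j) x))
  - ((∑ i ∈ Finset.Icc 1 n, ∑ j, nth x.1 i j * pd g (eQ d n i j) x)
   - (∑ i ∈ Finset.Icc 1 n, ∑ j,
       fderiv ℝ (Vpot d n U1 U2) x.2.1 (basisQ d n i j) * pd g (eP d n i j) x))

/-- The heat flows `Φ_i`, `0 ≤ i ≤ n`. -/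
def flow (d n : ℕ) (U2 : Vec d → ℝ) (lam : ℝ) (i : ℕ) (x : Phase d n) : ℝ :=
  if i = 0 then - lam * dotp x.2.2.1 (nth x.1 1)
  else if i = n then lam * dotp x.2.2.2 (nth x.1 n)
  else ∑ j, ((nth x.1 i j + nth x.1 (i + 1) j) / 2) *
        fderiv ℝ U2 (nth x.2.1 i - nth x.2.1 (i + 1)) (Pi.single j 1)

/-- The entropy productions `σ_i = (1/Tₙ - 1/T₁) Φ_i`. -/
def sigmaF (d n : ℕ) (U2 : Vec d → ℝ) (lam T1 Tn : ℝ) (i : ℕ) (x : Phase d n) : ℝ :=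
  (1 / Tn - 1 / T1) * flow d n U2 lam i x

/-- The local energies `H_i`, `1 ≤ i ≤ n`. -/
def locH (d n : ℕ) (U1 U2 : Vec d → ℝ) (i : ℕ) (x : Phase d n) : ℝ :=
  dotp (nth x.1 i) (nth x.1 i) / 2 + U1 (nth x.2.1 i)
  + (if 2 ≤ i then U2 (nth x.2.1 (i - 1) - nth x.2.1 i) else 0) / 2
  + (if i < n then U2 (nth x.2.1 i - nth x.2.1 (i + 1)) else 0) / 2

/-- `R_i = (1/T₁)(|r₁|²/2 + Σ_{k=1}^i H_k) + (1/Tₙ)(Σ_{k=i+1}^n H_k + |rₙ|²/2)`. -/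
def Rfun (d n : ℕ) (U1 U2 : Vec d → ℝ) (T1 Tn : ℝ) (i : ℕ) (x : Phase d n) : ℝ :=
  (1 / T1) * (dotp x.2.2.1 x.2.2.1 / 2 + ∑ k ∈ Finset.Icc 1 i, locH d n U1 U2 k x)
  + (1 / Tn) * ((∑ k ∈ Finset.Icc (i + 1) n, locH d n U1 U2 k x) + dotp x.2.2.2 x.2.2.2 / 2)

/-- The total energy `G(p,q,r) = |r₁|²/2 + |rₙ|²/2 + Σ|p_i|²/2 + V(q)`. -/
def Gfun (d n : ℕ) (U1 U2 : Vec d → ℝ) (x : Phase d n) : ℝ :=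
  dotp x.2.2.1 x.2.2.1 / 2 + dotp x.2.2.2 x.2.2.2 / 2
  + (∑ i : Fin n, dotp (x.1 i) (x.1 i) / 2) + Vpot d n U1 U2 x.2.1

/-- The chain energy `H_S(p,q) = Σ|p_i|²/2 + V(q)`. -/
def HS (d n : ℕ) (U1 U2 : Vec d → ℝ) (x : Phase d n) : ℝ :=
  (∑ i : Fin n, dotp (x.1 i) (x.1 i) / 2) + Vpot d n U1 U2 x.2.1

/-- Momentum reversal `(Jf)(p,q,r) = f(-p,q,r)`. -/
def Jop {d n : ℕ} (f : Phase d n → ℝ) : Phase d n → ℝ := fun x => f (-x.1, x.2)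

/-- `L̃_α f = L f + 2αγ (r₁·∇_{r₁} f + rₙ·∇_{rₙ} f)`. -/
def genTilde (d n : ℕ) (U1 U2 : Vec d → ℝ) (ga lam T1 Tn al : ℝ)
    (f : Phase d n → ℝ) (x : Phase d n) : ℝ :=
  gen d n U1 U2 ga lam T1 Tn f x
  + 2 * al * ga * ((∑ j, x.2.2.1 j * pd f (eR1 d n j) x)
                 + (∑ j, x.2.2.2 j * pd f (eRn d n j) x))

/-- `L̄_α f = L̃_α f - ((α-α²)γ(|r₁|²/T₁ + |rₙ|²/Tₙ) - 2dαγ) f`. -/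
def genBar (d n : ℕ) (U1 U2 : Vec d → ℝ) (ga lam T1 Tn al : ℝ)
    (f : Phase d n → ℝ) (x : Phase d n) : ℝ :=
  genTilde d n U1 U2 ga lam T1 Tn al f x
  - ((al - al ^ 2) * ga * (dotp x.2.2.1 x.2.2.1 / T1 + dotp x.2.2.2 x.2.2.2 / Tn)
     - 2 * (d : ℝ) * al * ga) * f x


section AuxDB

variable {d n : ℕ} {U1 U2 : Vec d → ℝ} {T : ℝ}

/-- coordinate continuous linear map: component `j` of `r₁`. -/
def cR1 (d n : ℕ) (j : Fin d) : Phase d n →L[ℝ] ℝ :=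
  (ContinuousLinearMap.proj j).comp ((ContinuousLinearMap.fst ℝ (Vec d) (Vec d)).comp
    ((ContinuousLinearMap.snd ℝ (Fin n → Vec d) (Vec d × Vec d)).comp
      (ContinuousLinearMap.snd ℝ (Fin n → Vec d) ((Fin n → Vec d) × (Vec d × Vec d)))))

/-- coordinate continuous linear map: component `j` of `rₙ`. -/
def cRn (d n : ℕ) (j : Fin d) : Phase d n →L[ℝ] ℝ :=
  (ContinuousLinearMap.proj j).comp ((ContinuousLinearMap.snd ℝ (Vec d) (Vec d)).comp
    ((ContinuousLinearMap.snd ℝ (Fin n → Vec d) (Vec d × Vec d)).comp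
      (ContinuousLinearMap.snd ℝ (Fin n → Vec d) ((Fin n → Vec d) × (Vec d × Vec d)))))

/-- coordinate continuous linear map: component `j` of `p_i`. -/
def cP (d n : ℕ) (i : Fin n) (j : Fin d) : Phase d n →L[ℝ] ℝ :=
  (ContinuousLinearMap.proj j).comp ((ContinuousLinearMap.proj i).comp
    (ContinuousLinearMap.fst ℝ (Fin n → Vec d) ((Fin n → Vec d) × (Vec d × Vec d))))

/-- projection onto the `q` block. -/
def piQ (d n : ℕ) : Phase d n →L[ℝ] (Fin n → Vec d) :=
  (ContinuousLinearMap.fst ℝ (Fin n → Vec d) (Vec d × Vec d)).comp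
    (ContinuousLinearMap.snd ℝ (Fin n → Vec d) ((Fin n → Vec d) × (Vec d × Vec d)))

/-- momentum reversal as a continuous linear map. -/
def Amap (d n : ℕ) : Phase d n →L[ℝ] Phase d n :=
  (-(ContinuousLinearMap.id ℝ (Fin n → Vec d))).prodMap
    (ContinuousLinearMap.id ℝ ((Fin n → Vec d) × (Vec d × Vec d)))

lemma Amap_fst (x : Phase d n) : (Amap d n x).1 = -x.1 := rfl
lemma Amap_snd (x : Phase d n) : (Amap d n x).2 = x.2 := rfl

lemma Amap_invol (x : Phase d n) : Amap d n (Amap d n x) = x := by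
  refine Prod.ext ?_ rfl
  show -(-x.1) = x.1
  simp

lemma Jop_apply (u : Phase d n → ℝ) (x : Phase d n) : Jop u x = u (Amap d n x) := rfl

lemma Amap_eR1 (j : Fin d) : Amap d n (eR1 d n j) = eR1 d n j := by
  refine Prod.ext ?_ rfl
  show -(0 : Fin n → Vec d) = 0
  simp

lemma Amap_eRn (j : Fin d) : Amap d n (eRn d n j) = eRn d n j := by
  refine Prod.ext ?_ rfl
  show -(0 : Fin n → Vec d) = 0
  simp

lemma Amap_eQ (i : ℕ) (j : Fin d) : Amap d n (eQ d n i j) = eQ d n i j := by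
  refine Prod.ext ?_ rfl
  show -(0 : Fin n → Vec d) = 0
  simp

lemma Amap_eP (i : ℕ) (j : Fin d) : Amap d n (eP d n i j) = -(eP d n i j) := by
  refine Prod.ext rfl ?_
  show ((0 : Fin n → Vec d), ((0 : Vec d), (0 : Vec d))) = -((0 : Fin n → Vec d), ((0 : Vec d), (0 : Vec d)))
  simp

lemma pd_neg (f : Phase d n → ℝ) (v x : Phase d n) : pd f (-v) x = -(pd f v x) := by
  simp [pd]

lemma dotp_single (a : Vec d) (j : Fin d) : dotp a (Pi.single j 1) = a j := by
  simp [dotp, Pi.single_apply, mul_ite, Finset.sum_ite_eq']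

lemma dotp_zero (a : Vec d) : dotp a 0 = 0 := by simp [dotp]

lemma nth_neg (v : Fin n → Vec d) (i : ℕ) : nth (-v) i = -(nth v i) := by
  unfold nth
  split <;> simp

lemma sum_dotp_basisQ (w : Fin n → Vec d) (i : ℕ) (j : Fin d) :
    (∑ i' : Fin n, dotp (w i') (basisQ d n i j i')) = nth w i j := by
  unfold basisQ nth
  split
  · next hrange =>
    rw [Finset.sum_eq_single (⟨i - 1, by omega⟩ : Fin n)]
    · simp [dotp_single]
    · intro b _ hb
      simp [Pi.single_apply, hb, dotp_zero]
    · intro hb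
      exact absurd (Finset.mem_univ _) hb
  · simp [dotp_zero]

lemma contDiff_nth (i : ℕ) : ContDiff ℝ (⊤:ℕ∞) (fun q : Fin n → Vec d => nth q i) := by
  unfold nth
  by_cases h : 1 ≤ i ∧ i ≤ n
  · simp only [h, dif_pos]
    exact (ContinuousLinearMap.proj (⟨i - 1, by omega⟩ : Fin n)
      : (Fin n → Vec d) →L[ℝ] Vec d).contDiff
  · simp only [h, dif_neg, not_false_iff]
    exact contDiff_const

lemma contDiff_Vpot (hU1 : ContDiff ℝ (⊤:ℕ∞) U1) (hU2 : ContDiff ℝ (⊤:ℕ∞) U2) :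
    ContDiff ℝ (⊤:ℕ∞) (Vpot d n U1 U2) := by
  unfold Vpot
  apply ContDiff.add
  · exact ContDiff.sum fun i _ => hU1.comp (contDiff_nth i)
  · exact ContDiff.sum fun i _ => hU2.comp ((contDiff_nth i).sub (contDiff_nth (i+1)))

lemma contDiff_Gfun (hU1 : ContDiff ℝ (⊤:ℕ∞) U1) (hU2 : ContDiff ℝ (⊤:ℕ∞) U2) :
    ContDiff ℝ (⊤:ℕ∞) (Gfun d n U1 U2) := by
  unfold Gfun dotp
  refine (((ContDiff.add ?_ ?_).add ?_).add ?_)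
  · exact ContDiff.div_const (ContDiff.sum fun j _ =>
      ((cR1 d n j).contDiff).mul ((cR1 d n j).contDiff)) 2
  · exact ContDiff.div_const (ContDiff.sum fun j _ =>
      ((cRn d n j).contDiff).mul ((cRn d n j).contDiff)) 2
  · exact ContDiff.sum fun i _ => ContDiff.div_const (ContDiff.sum fun j _ =>
      ((cP d n i j).contDiff).mul ((cP d n i j).contDiff)) 2
  · exact (contDiff_Vpot hU1 hU2).comp (piQ d n).contDiff

lemma contDiff_pd {f : Phase d n → ℝ} (hf : ContDiff ℝ (⊤:ℕ∞) f) (v : Phase d n) :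
    ContDiff ℝ (⊤:ℕ∞) (fun y => fderiv ℝ f y v) :=
  (hf.fderiv_right (by exact_mod_cast le_top)).clm_apply contDiff_const

lemma fderiv_Gfun_apply (hU1 : ContDiff ℝ (⊤:ℕ∞) U1) (hU2 : ContDiff ℝ (⊤:ℕ∞) U2)
    (x v : Phase d n) :
    fderiv ℝ (Gfun d n U1 U2) x v
      = dotp x.2.2.1 v.2.2.1 + dotp x.2.2.2 v.2.2.2
        + (∑ i : Fin n, dotp (x.1 i) (v.1 i))
        + fderiv ℝ (Vpot d n U1 U2) x.2.1 v.2.1 := by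
  have hA := (HasFDerivAt.fun_sum (fun j (_ : j ∈ (Finset.univ : Finset (Fin d))) =>
      ((cR1 d n j).hasFDerivAt (x := x)).mul ((cR1 d n j).hasFDerivAt))).mul_const (2⁻¹:ℝ)
  have hB := (HasFDerivAt.fun_sum (fun j (_ : j ∈ (Finset.univ : Finset (Fin d))) =>
      ((cRn d n j).hasFDerivAt (x := x)).mul ((cRn d n j).hasFDerivAt))).mul_const (2⁻¹:ℝ)
  have hC := HasFDerivAt.fun_sum (fun i (_ : i ∈ (Finset.univ : Finset (Fin n))) =>
      (HasFDerivAt.fun_sum (fun j (_ : j ∈ (Finset.univ : Finset (Fin d))) =>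
      ((cP d n i j).hasFDerivAt (x := x)).mul ((cP d n i j).hasFDerivAt))).mul_const (2⁻¹:ℝ))
  have hD := (((contDiff_Vpot hU1 hU2).differentiable (by simp))
      (piQ d n x)).hasFDerivAt.comp x ((piQ d n).hasFDerivAt)
  have hG : HasFDerivAt (Gfun d n U1 U2) _ x := ((hA.add hB).add hC).add hD
  rw [hG.fderiv]
  have e1 : ((2⁻¹:ℝ) • ∑ j : Fin d, ((cR1 d n j) x • cR1 d n j + (cR1 d n j) x • cR1 d n j)) v
      = dotp x.2.2.1 v.2.2.1 := by
    simp [cR1, dotp, Finset.sum_add_distrib]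
    ring
  have e2 : ((2⁻¹:ℝ) • ∑ j : Fin d, ((cRn d n j) x • cRn d n j + (cRn d n j) x • cRn d n j)) v
      = dotp x.2.2.2 v.2.2.2 := by
    simp [cRn, dotp, Finset.sum_add_distrib]
    ring
  have e3 : (∑ i : Fin n, (2⁻¹:ℝ) • ∑ j : Fin d,
        ((cP d n i j) x • cP d n i j + (cP d n i j) x • cP d n i j)) v
      = ∑ i : Fin n, dotp (x.1 i) (v.1 i) := by
    rw [ContinuousLinearMap.sum_apply]
    refine Finset.sum_congr rfl fun i _ => ?_
    simp [cP, dotp, Finset.sum_add_distrib]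
    ring
  have e4 : ((fderiv ℝ (Vpot d n U1 U2) ((piQ d n) x)).comp (piQ d n)) v
      = fderiv ℝ (Vpot d n U1 U2) x.2.1 v.2.1 := rfl
  simp only [ContinuousLinearMap.add_apply]
  rw [e1, e2, e3, e4]

lemma fderiv_Gfun_eR1 (hU1 : ContDiff ℝ (⊤:ℕ∞) U1) (hU2 : ContDiff ℝ (⊤:ℕ∞) U2)
    (x : Phase d n) (j : Fin d) :
    fderiv ℝ (Gfun d n U1 U2) x (eR1 d n j) = x.2.2.1 j := by
  rw [fderiv_Gfun_apply hU1 hU2]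
  show dotp x.2.2.1 (Pi.single j 1) + dotp x.2.2.2 0
      + (∑ i : Fin n, dotp (x.1 i) ((0 : Fin n → Vec d) i))
      + fderiv ℝ (Vpot d n U1 U2) x.2.1 0 = x.2.2.1 j
  simp [dotp_single, dotp_zero]

lemma fderiv_Gfun_eRn (hU1 : ContDiff ℝ (⊤:ℕ∞) U1) (hU2 : ContDiff ℝ (⊤:ℕ∞) U2)
    (x : Phase d n) (j : Fin d) :
    fderiv ℝ (Gfun d n U1 U2) x (eRn d n j) = x.2.2.2 j := by
  rw [fderiv_Gfun_apply hU1 hU2]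
  show dotp x.2.2.1 0 + dotp x.2.2.2 (Pi.single j 1)
      + (∑ i : Fin n, dotp (x.1 i) ((0 : Fin n → Vec d) i))
      + fderiv ℝ (Vpot d n U1 U2) x.2.1 0 = x.2.2.2 j
  simp [dotp_single, dotp_zero]

lemma fderiv_Gfun_eP (hU1 : ContDiff ℝ (⊤:ℕ∞) U1) (hU2 : ContDiff ℝ (⊤:ℕ∞) U2)
    (x : Phase d n) (i : ℕ) (j : Fin d) :
    fderiv ℝ (Gfun d n U1 U2) x (eP d n i j) = nth x.1 i j := by
  rw [fderiv_Gfun_apply hU1 hU2]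
  show dotp x.2.2.1 0 + dotp x.2.2.2 0
      + (∑ i' : Fin n, dotp (x.1 i') (basisQ d n i j i'))
      + fderiv ℝ (Vpot d n U1 U2) x.2.1 0 = nth x.1 i j
  simp [dotp_zero, sum_dotp_basisQ]

lemma fderiv_Gfun_eQ (hU1 : ContDiff ℝ (⊤:ℕ∞) U1) (hU2 : ContDiff ℝ (⊤:ℕ∞) U2)
    (x : Phase d n) (i : ℕ) (j : Fin d) :
    fderiv ℝ (Gfun d n U1 U2) x (eQ d n i j)
      = fderiv ℝ (Vpot d n U1 U2) x.2.1 (basisQ d n i j) := by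
  rw [fderiv_Gfun_apply hU1 hU2]
  show dotp x.2.2.1 0 + dotp x.2.2.2 0
      + (∑ i' : Fin n, dotp (x.1 i') ((0 : Fin n → Vec d) i'))
      + fderiv ℝ (Vpot d n U1 U2) x.2.1 (basisQ d n i j)
      = fderiv ℝ (Vpot d n U1 U2) x.2.1 (basisQ d n i j)
  simp [dotp_zero]

lemma Gfun_neg (z : Phase d n) : Gfun d n U1 U2 (-z.1, z.2) = Gfun d n U1 U2 z := by
  unfold Gfun
  simp [dotp, neg_mul_neg]

lemma pd_Jop {f : Phase d n → ℝ} (hf : Differentiable ℝ f) (v x : Phase d n) :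
    pd (Jop f) v x = pd f (Amap d n v) (Amap d n x) := by
  have hcomp : Jop f = f ∘ ⇑(Amap d n) := rfl
  rw [pd, hcomp, fderiv_comp (x := x) (hf _) (Amap d n).differentiableAt,
    ContinuousLinearMap.fderiv]
  rfl

lemma pd2_Jop {f : Phase d n → ℝ} (hf : ContDiff ℝ (⊤:ℕ∞) f) (v x : Phase d n) :
    pd2 (Jop f) v x = pd2 f (Amap d n v) (Amap d n x) := by
  unfold pd2
  have h1 : (fun y => fderiv ℝ (Jop f) y v)
      = (fun z => fderiv ℝ f z (Amap d n v)) ∘ ⇑(Amap d n) :=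
    funext fun y => pd_Jop (hf.differentiable (by simp)) v y
  rw [h1, fderiv_comp (x := x) ((contDiff_pd hf (Amap d n v)).differentiable
      (by simp) _) (Amap d n).differentiableAt,
    ContinuousLinearMap.fderiv]
  rfl

lemma pd_exp_mul (hU1 : ContDiff ℝ (⊤:ℕ∞) U1) (hU2 : ContDiff ℝ (⊤:ℕ∞) U2)
    {F : Phase d n → ℝ} (hF : Differentiable ℝ F) (v y : Phase d n) :
    pd (fun z => Real.exp (-(Gfun d n U1 U2 z) / T) * F z) v y
      = Real.exp (-(Gfun d n U1 U2 y) / T)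
        * (pd F v y - fderiv ℝ (Gfun d n U1 U2) y v / T * F y) := by
  have hG : HasFDerivAt (Gfun d n U1 U2) (fderiv ℝ (Gfun d n U1 U2) y) y :=
    (((contDiff_Gfun hU1 hU2).differentiable (by simp)) y).hasFDerivAt
  have h1 : HasFDerivAt (fun z => -(Gfun d n U1 U2 z) / T)
      ((T⁻¹:ℝ) • (-(fderiv ℝ (Gfun d n U1 U2) y))) y := hG.neg.mul_const (T⁻¹:ℝ)
  have h2 := h1.exp
  have h3 : HasFDerivAt (fun z => Real.exp (-(Gfun d n U1 U2 z) / T) * F z) _ y :=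
    h2.mul (hF y).hasFDerivAt
  rw [pd, h3.fderiv]
  simp only [ContinuousLinearMap.add_apply, ContinuousLinearMap.smul_apply,
    ContinuousLinearMap.neg_apply, smul_eq_mul]
  rw [pd]
  ring

lemma pd2_exp_mul_R1 (hU1 : ContDiff ℝ (⊤:ℕ∞) U1) (hU2 : ContDiff ℝ (⊤:ℕ∞) U2)
    {F : Phase d n → ℝ} (hF : ContDiff ℝ (⊤:ℕ∞) F) (j : Fin d) (y : Phase d n) :
    pd2 (fun z => Real.exp (-(Gfun d n U1 U2 z) / T) * F z) (eR1 d n j) y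
      = Real.exp (-(Gfun d n U1 U2 y) / T)
        * (pd2 F (eR1 d n j) y - 2 * y.2.2.1 j * pd F (eR1 d n j) y / T
           + (y.2.2.1 j * y.2.2.1 j / T^2 - 1/T) * F y) := by
  have hFd : Differentiable ℝ F := hF.differentiable (by simp)
  unfold pd2
  have hstep : (fun z => fderiv ℝ (fun w => Real.exp (-(Gfun d n U1 U2 w) / T) * F w) z (eR1 d n j))
      = fun z => Real.exp (-(Gfun d n U1 U2 z) / T)
          * (fderiv ℝ F z (eR1 d n j) - z.2.2.1 j / T * F z) := by
    funext z
    have := pd_exp_mul (T := T) hU1 hU2 hFd (eR1 d n j) z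
    rw [pd, pd] at this
    rw [this, fderiv_Gfun_eR1 hU1 hU2]
  rw [hstep]
  have hPhi : Differentiable ℝ (fun z : Phase d n =>
      fderiv ℝ F z (eR1 d n j) - z.2.2.1 j / T * F z) := by
    refine Differentiable.sub ((contDiff_pd hF (eR1 d n j)).differentiable
      (by simp)) (Differentiable.mul ?_ hFd)
    exact (cR1 d n j).differentiable.mul_const (T⁻¹:ℝ)
  have hmain := pd_exp_mul (T := T) hU1 hU2 hPhi (eR1 d n j) y
  rw [pd, pd] at hmain
  rw [hmain, fderiv_Gfun_eR1 hU1 hU2]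
  have hsub : fderiv ℝ (fun z : Phase d n =>
        fderiv ℝ F z (eR1 d n j) - z.2.2.1 j / T * F z) y (eR1 d n j)
      = pd2 F (eR1 d n j) y - (1/T * F y + y.2.2.1 j / T * pd F (eR1 d n j) y) := by
    have hd1 : DifferentiableAt ℝ (fun z : Phase d n => fderiv ℝ F z (eR1 d n j)) y :=
      (contDiff_pd hF (eR1 d n j)).differentiable (by simp) y
    have hmul : HasFDerivAt (fun z : Phase d n => z.2.2.1 j / T * F z)
        ((cR1 d n j y * T⁻¹) • fderiv ℝ F y + F y • ((T⁻¹:ℝ) • cR1 d n j)) y :=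
      (((cR1 d n j).hasFDerivAt (x := y)).mul_const (T⁻¹:ℝ)).mul (hFd y).hasFDerivAt
    rw [fderiv_fun_sub hd1 hmul.differentiableAt, ContinuousLinearMap.sub_apply, hmul.fderiv]
    have hc : cR1 d n j (eR1 d n j) = 1 := by
      simp [cR1, eR1]
    simp only [ContinuousLinearMap.add_apply, ContinuousLinearMap.smul_apply, smul_eq_mul, hc]
    have hcy : cR1 d n j y = y.2.2.1 j := rfl
    rw [hcy]
    simp only [pd2, pd]
    ring
  rw [hsub]
  simp only [pd, pd2]
  ring

lemma pd2_exp_mul_Rn (hU1 : ContDiff ℝ (⊤:ℕ∞) U1) (hU2 : ContDiff ℝ (⊤:ℕ∞) U2)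
    {F : Phase d n → ℝ} (hF : ContDiff ℝ (⊤:ℕ∞) F) (j : Fin d) (y : Phase d n) :
    pd2 (fun z => Real.exp (-(Gfun d n U1 U2 z) / T) * F z) (eRn d n j) y
      = Real.exp (-(Gfun d n U1 U2 y) / T)
        * (pd2 F (eRn d n j) y - 2 * y.2.2.2 j * pd F (eRn d n j) y / T
           + (y.2.2.2 j * y.2.2.2 j / T^2 - 1/T) * F y) := by
  have hFd : Differentiable ℝ F := hF.differentiable (by simp)
  unfold pd2
  have hstep : (fun z => fderiv ℝ (fun w => Real.exp (-(Gfun d n U1 U2 w) / T) * F w) z (eRn d n j))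
      = fun z => Real.exp (-(Gfun d n U1 U2 z) / T)
          * (fderiv ℝ F z (eRn d n j) - z.2.2.2 j / T * F z) := by
    funext z
    have := pd_exp_mul (T := T) hU1 hU2 hFd (eRn d n j) z
    rw [pd, pd] at this
    rw [this, fderiv_Gfun_eRn hU1 hU2]
  rw [hstep]
  have hPhi : Differentiable ℝ (fun z : Phase d n =>
      fderiv ℝ F z (eRn d n j) - z.2.2.2 j / T * F z) := by
    refine Differentiable.sub ((contDiff_pd hF (eRn d n j)).differentiable
      (by simp)) (Differentiable.mul ?_ hFd)
    exact (cRn d n j).differentiable.mul_const (T⁻¹:ℝ)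
  have hmain := pd_exp_mul (T := T) hU1 hU2 hPhi (eRn d n j) y
  rw [pd, pd] at hmain
  rw [hmain, fderiv_Gfun_eRn hU1 hU2]
  have hsub : fderiv ℝ (fun z : Phase d n =>
        fderiv ℝ F z (eRn d n j) - z.2.2.2 j / T * F z) y (eRn d n j)
      = pd2 F (eRn d n j) y - (1/T * F y + y.2.2.2 j / T * pd F (eRn d n j) y) := by
    have hd1 : DifferentiableAt ℝ (fun z : Phase d n => fderiv ℝ F z (eRn d n j)) y :=
      (contDiff_pd hF (eRn d n j)).differentiable (by simp) y
    have hmul : HasFDerivAt (fun z : Phase d n => z.2.2.2 j / T * F z)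
        ((cRn d n j y * T⁻¹) • fderiv ℝ F y + F y • ((T⁻¹:ℝ) • cRn d n j)) y :=
      (((cRn d n j).hasFDerivAt (x := y)).mul_const (T⁻¹:ℝ)).mul (hFd y).hasFDerivAt
    rw [fderiv_fun_sub hd1 hmul.differentiableAt, ContinuousLinearMap.sub_apply, hmul.fderiv]
    have hc : cRn d n j (eRn d n j) = 1 := by
      simp [cRn, eRn]
    simp only [ContinuousLinearMap.add_apply, ContinuousLinearMap.smul_apply, smul_eq_mul, hc]
    have hcy : cRn d n j y = y.2.2.2 j := rfl
    rw [hcy]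
    simp only [pd2, pd]
    ring
  rw [hsub]
  simp only [pd, pd2]
  ring

end AuxDB

/-- detailed balance at equilibrium `T₁ = Tₙ = T`:
`e^{G/T} J Lᵀ J e^{-G/T} = L`. -/
theorem detailed_balance
    (d n : ℕ) (hd : 1 ≤ d) (hn : 2 ≤ n)
    (U1 U2 : Vec d → ℝ) (hU1 : ContDiff ℝ (⊤ : ℕ∞) U1) (hU2 : ContDiff ℝ (⊤ : ℕ∞) U2)
    (ga lam T : ℝ) (hga : 0 < ga) (hT : 0 < T)
    (f : Phase d n → ℝ) (hf : ContDiff ℝ (⊤ : ℕ∞) f) :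
    ∀ x : Phase d n,
      Real.exp (Gfun d n U1 U2 x / T) *
        Jop (genT d n U1 U2 ga lam T T
          (Jop (fun y => Real.exp (-(Gfun d n U1 U2 y) / T) * f y))) x
      = gen d n U1 U2 ga lam T T f x := by
  intro x
  have hT0 : T ≠ 0 := ne_of_gt hT
  have hfd : Differentiable ℝ f := hf.differentiable (by simp)
  have hrw : Jop (fun y => Real.exp (-(Gfun d n U1 U2 y) / T) * f y)
      = fun z => Real.exp (-(Gfun d n U1 U2 z) / T) * Jop f z := by
    funext z
    show Real.exp (-(Gfun d n U1 U2 (-z.1, z.2)) / T) * f (-z.1, z.2) = _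
    rw [Gfun_neg]
    rfl
  rw [hrw, Jop_apply]
  set F : Phase d n → ℝ := Jop f with hFdef
  have hFc : ContDiff ℝ (⊤:ℕ∞) F := hf.comp (Amap d n).contDiff
  have hFcd : Differentiable ℝ F := hFc.differentiable (by simp)
  set h : Phase d n → ℝ := fun z => Real.exp (-(Gfun d n U1 U2 z) / T) * F z with hhdef
  set Ax : Phase d n := Amap d n x with hAxdef
  set Ex : ℝ := Real.exp (-(Gfun d n U1 U2 x) / T) with hExdef
  have hAA : Amap d n Ax = x := Amap_invol x
  have hGAx : Gfun d n U1 U2 Ax = Gfun d n U1 U2 x := by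
    rw [hAxdef]
    show Gfun d n U1 U2 (-x.1, x.2) = _
    exact Gfun_neg x
  have hEAx : Real.exp (-(Gfun d n U1 U2 Ax) / T) = Ex := by rw [hGAx]
  have hFAx : F Ax = f x := by
    show f (Amap d n Ax) = f x
    rw [hAA]
  have hhAx : h Ax = Ex * f x := by
    rw [hhdef]
    show Real.exp (-(Gfun d n U1 U2 Ax) / T) * F Ax = Ex * f x
    rw [hEAx, hFAx]
  have hpdF : ∀ v, pd F v Ax = pd f (Amap d n v) x := fun v => by
    rw [hFdef, hAxdef, pd_Jop hfd, Amap_invol]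
  have hpd2F : ∀ v, pd2 F v Ax = pd2 f (Amap d n v) x := fun v => by
    rw [hFdef, hAxdef, pd2_Jop hf, Amap_invol]
  have hAxr1 : Ax.2.2.1 = x.2.2.1 := rfl
  have hAxr2 : Ax.2.2.2 = x.2.2.2 := rfl
  have hAxq : Ax.2.1 = x.2.1 := rfl
  have hAxp : ∀ i : ℕ, nth Ax.1 i = -(nth x.1 i) := fun i => by
    rw [hAxdef, Amap_fst, nth_neg]
  have keyR1 : ∀ j : Fin d, pd h (eR1 d n j) Ax
      = Ex * (pd f (eR1 d n j) x - x.2.2.1 j / T * f x) := by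
    intro j
    rw [hhdef, pd_exp_mul hU1 hU2 hFcd, fderiv_Gfun_eR1 hU1 hU2, hEAx, hFAx, hpdF,
      Amap_eR1, hAxr1]
  have keyRn : ∀ j : Fin d, pd h (eRn d n j) Ax
      = Ex * (pd f (eRn d n j) x - x.2.2.2 j / T * f x) := by
    intro j
    rw [hhdef, pd_exp_mul hU1 hU2 hFcd, fderiv_Gfun_eRn hU1 hU2, hEAx, hFAx, hpdF,
      Amap_eRn, hAxr2]
  have keyP : ∀ (i : ℕ) (j : Fin d), pd h (eP d n i j) Ax
      = Ex * (-(pd f (eP d n i j) x) + nth x.1 i j / T * f x) := by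
    intro i j
    rw [hhdef, pd_exp_mul hU1 hU2 hFcd, fderiv_Gfun_eP hU1 hU2, hEAx, hFAx, hpdF,
      Amap_eP, pd_neg, hAxp i]
    simp only [Pi.neg_apply]
    ring
  have keyQ : ∀ (i : ℕ) (j : Fin d), pd h (eQ d n i j) Ax
      = Ex * (pd f (eQ d n i j) x
          - fderiv ℝ (Vpot d n U1 U2) x.2.1 (basisQ d n i j) / T * f x) := by
    intro i j
    rw [hhdef, pd_exp_mul hU1 hU2 hFcd, fderiv_Gfun_eQ hU1 hU2, hEAx, hFAx, hpdF,
      Amap_eQ, hAxq]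
  have key2R1 : ∀ j : Fin d, pd2 h (eR1 d n j) Ax
      = Ex * (pd2 f (eR1 d n j) x - 2 * x.2.2.1 j * pd f (eR1 d n j) x / T
        + (x.2.2.1 j * x.2.2.1 j / T^2 - 1/T) * f x) := by
    intro j
    rw [hhdef, pd2_exp_mul_R1 hU1 hU2 hFc, hEAx, hFAx, hpdF, hpd2F, Amap_eR1, hAxr1]
  have key2Rn : ∀ j : Fin d, pd2 h (eRn d n j) Ax
      = Ex * (pd2 f (eRn d n j) x - 2 * x.2.2.2 j * pd f (eRn d n j) x / T
        + (x.2.2.2 j * x.2.2.2 j / T^2 - 1/T) * f x) := by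
    intro j
    rw [hhdef, pd2_exp_mul_Rn hU1 hU2 hFc, hEAx, hFAx, hpdF, hpd2F, Amap_eRn, hAxr2]
  have S1 : ∑ j, pd2 h (eR1 d n j) Ax
      = Ex * (∑ j, pd2 f (eR1 d n j) x)
        + (-(2*Ex/T)) * (∑ j, x.2.2.1 j * pd f (eR1 d n j) x)
        + (Ex/T^2 * f x) * (∑ j, x.2.2.1 j * x.2.2.1 j)
        + (d:ℝ) * (-(Ex/T) * f x) := by
    rw [Finset.sum_congr rfl fun j (_ : j ∈ Finset.univ) =>
      (by rw [key2R1 j]; ring :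
        pd2 h (eR1 d n j) Ax
          = Ex * pd2 f (eR1 d n j) x
            + (-(2*Ex/T)) * (x.2.2.1 j * pd f (eR1 d n j) x)
            + (Ex/T^2 * f x) * (x.2.2.1 j * x.2.2.1 j)
            + (-(Ex/T) * f x))]
    simp only [Finset.sum_add_distrib, ← Finset.mul_sum, Finset.sum_const,
      Finset.card_univ, Fintype.card_fin, nsmul_eq_mul]
    ring
  have S2 : ∑ j, pd2 h (eRn d n j) Ax
      = Ex * (∑ j, pd2 f (eRn d n j) x)
        + (-(2*Ex/T)) * (∑ j, x.2.2.2 j * pd f (eRn d n j) x)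
        + (Ex/T^2 * f x) * (∑ j, x.2.2.2 j * x.2.2.2 j)
        + (d:ℝ) * (-(Ex/T) * f x) := by
    rw [Finset.sum_congr rfl fun j (_ : j ∈ Finset.univ) =>
      (by rw [key2Rn j]; ring :
        pd2 h (eRn d n j) Ax
          = Ex * pd2 f (eRn d n j) x
            + (-(2*Ex/T)) * (x.2.2.2 j * pd f (eRn d n j) x)
            + (Ex/T^2 * f x) * (x.2.2.2 j * x.2.2.2 j)
            + (-(Ex/T) * f x))]
    simp only [Finset.sum_add_distrib, ← Finset.mul_sum, Finset.sum_const,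
      Finset.card_univ, Fintype.card_fin, nsmul_eq_mul]
    ring
  have S3 : ∑ j, Ax.2.2.1 j * pd h (eR1 d n j) Ax
      = Ex * (∑ j, x.2.2.1 j * pd f (eR1 d n j) x)
        + (-(Ex/T) * f x) * (∑ j, x.2.2.1 j * x.2.2.1 j) := by
    rw [Finset.sum_congr rfl fun j (_ : j ∈ Finset.univ) =>
      (by rw [hAxr1, keyR1 j]; ring :
        Ax.2.2.1 j * pd h (eR1 d n j) Ax
          = Ex * (x.2.2.1 j * pd f (eR1 d n j) x)
            + (-(Ex/T) * f x) * (x.2.2.1 j * x.2.2.1 j))]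
    simp only [Finset.sum_add_distrib, ← Finset.mul_sum]
  have S4 : ∑ j, Ax.2.2.2 j * pd h (eRn d n j) Ax
      = Ex * (∑ j, x.2.2.2 j * pd f (eRn d n j) x)
        + (-(Ex/T) * f x) * (∑ j, x.2.2.2 j * x.2.2.2 j) := by
    rw [Finset.sum_congr rfl fun j (_ : j ∈ Finset.univ) =>
      (by rw [hAxr2, keyRn j]; ring :
        Ax.2.2.2 j * pd h (eRn d n j) Ax
          = Ex * (x.2.2.2 j * pd f (eRn d n j) x)
            + (-(Ex/T) * f x) * (x.2.2.2 j * x.2.2.2 j))]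
    simp only [Finset.sum_add_distrib, ← Finset.mul_sum]
  have S5 : ∑ j, nth Ax.1 1 j * pd h (eR1 d n j) Ax
      = (-Ex) * (∑ j, nth x.1 1 j * pd f (eR1 d n j) x)
        + (Ex/T * f x) * (∑ j, nth x.1 1 j * x.2.2.1 j) := by
    rw [Finset.sum_congr rfl fun j (_ : j ∈ Finset.univ) =>
      (by rw [hAxp 1, keyR1 j]; simp only [Pi.neg_apply]; ring :
        nth Ax.1 1 j * pd h (eR1 d n j) Ax
          = (-Ex) * (nth x.1 1 j * pd f (eR1 d n j) x)
            + (Ex/T * f x) * (nth x.1 1 j * x.2.2.1 j))]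
    simp only [Finset.sum_add_distrib, ← Finset.mul_sum]
  have S6 : ∑ j, nth Ax.1 n j * pd h (eRn d n j) Ax
      = (-Ex) * (∑ j, nth x.1 n j * pd f (eRn d n j) x)
        + (Ex/T * f x) * (∑ j, nth x.1 n j * x.2.2.2 j) := by
    rw [Finset.sum_congr rfl fun j (_ : j ∈ Finset.univ) =>
      (by rw [hAxp n, keyRn j]; simp only [Pi.neg_apply]; ring :
        nth Ax.1 n j * pd h (eRn d n j) Ax
          = (-Ex) * (nth x.1 n j * pd f (eRn d n j) x)
            + (Ex/T * f x) * (nth x.1 n j * x.2.2.2 j))]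
    simp only [Finset.sum_add_distrib, ← Finset.mul_sum]
  have S7 : ∑ j, Ax.2.2.1 j * pd h (eP d n 1 j) Ax
      = (-Ex) * (∑ j, x.2.2.1 j * pd f (eP d n 1 j) x)
        + (Ex/T * f x) * (∑ j, nth x.1 1 j * x.2.2.1 j) := by
    rw [Finset.sum_congr rfl fun j (_ : j ∈ Finset.univ) =>
      (by rw [hAxr1, keyP 1 j]; ring :
        Ax.2.2.1 j * pd h (eP d n 1 j) Ax
          = (-Ex) * (x.2.2.1 j * pd f (eP d n 1 j) x)
            + (Ex/T * f x) * (nth x.1 1 j * x.2.2.1 j))]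
    simp only [Finset.sum_add_distrib, ← Finset.mul_sum]
  have S8 : ∑ j, Ax.2.2.2 j * pd h (eP d n n j) Ax
      = (-Ex) * (∑ j, x.2.2.2 j * pd f (eP d n n j) x)
        + (Ex/T * f x) * (∑ j, nth x.1 n j * x.2.2.2 j) := by
    rw [Finset.sum_congr rfl fun j (_ : j ∈ Finset.univ) =>
      (by rw [hAxr2, keyP n j]; ring :
        Ax.2.2.2 j * pd h (eP d n n j) Ax
          = (-Ex) * (x.2.2.2 j * pd f (eP d n n j) x)
            + (Ex/T * f x) * (nth x.1 n j * x.2.2.2 j))]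
    simp only [Finset.sum_add_distrib, ← Finset.mul_sum]
  have S9 : ∑ i ∈ Finset.Icc 1 n, ∑ j, nth Ax.1 i j * pd h (eQ d n i j) Ax
      = (-Ex) * (∑ i ∈ Finset.Icc 1 n, ∑ j, nth x.1 i j * pd f (eQ d n i j) x)
        + (Ex/T * f x) * (∑ i ∈ Finset.Icc 1 n, ∑ j,
            nth x.1 i j * fderiv ℝ (Vpot d n U1 U2) x.2.1 (basisQ d n i j)) := by
    rw [Finset.sum_congr rfl fun i (_ : i ∈ Finset.Icc 1 n) =>
      Finset.sum_congr rfl fun j (_ : j ∈ Finset.univ) =>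
      (by rw [hAxp i, keyQ i j]; simp only [Pi.neg_apply]; ring :
        nth Ax.1 i j * pd h (eQ d n i j) Ax
          = (-Ex) * (nth x.1 i j * pd f (eQ d n i j) x)
            + (Ex/T * f x) * (nth x.1 i j * fderiv ℝ (Vpot d n U1 U2) x.2.1 (basisQ d n i j)))]
    simp only [Finset.sum_add_distrib, ← Finset.mul_sum]
  have S10 : ∑ i ∈ Finset.Icc 1 n, ∑ j,
        fderiv ℝ (Vpot d n U1 U2) Ax.2.1 (basisQ d n i j) * pd h (eP d n i j) Ax
      = (-Ex) * (∑ i ∈ Finset.Icc 1 n, ∑ j,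
            fderiv ℝ (Vpot d n U1 U2) x.2.1 (basisQ d n i j) * pd f (eP d n i j) x)
        + (Ex/T * f x) * (∑ i ∈ Finset.Icc 1 n, ∑ j,
            nth x.1 i j * fderiv ℝ (Vpot d n U1 U2) x.2.1 (basisQ d n i j)) := by
    rw [Finset.sum_congr rfl fun i (_ : i ∈ Finset.Icc 1 n) =>
      Finset.sum_congr rfl fun j (_ : j ∈ Finset.univ) =>
      (by rw [hAxq, keyP i j]; ring :
        fderiv ℝ (Vpot d n U1 U2) Ax.2.1 (basisQ d n i j) * pd h (eP d n i j) Ax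
          = (-Ex) * (fderiv ℝ (Vpot d n U1 U2) x.2.1 (basisQ d n i j) * pd f (eP d n i j) x)
            + (Ex/T * f x) * (nth x.1 i j * fderiv ℝ (Vpot d n U1 U2) x.2.1 (basisQ d n i j)))]
    simp only [Finset.sum_add_distrib, ← Finset.mul_sum]
  unfold genT gen gen0 gen1
  rw [S1, S2, S3, S4, S5, S6, S7, S8, S9, S10, hhAx]
  have hEK : Ex = (Real.exp (Gfun d n U1 U2 x / T))⁻¹ := by
    rw [hExdef, neg_div, Real.exp_neg]
  rw [hEK]
  have hKne : Real.exp (Gfun d n U1 U2 x / T) ≠ 0 := Real.exp_ne_zero _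
  field_simp
  ring

end EP
end
end

section
/- For every α ∈ ℝ, every 0 ≤ i ≤ n and every smooth f : X → ℝ, the second-order part of the generator satisfies the conjugation identity e^{−αR_i} · L_0( e^{αR_i} · f ) = L_0 f + 2αγ(r_1·∇_{r_1} f + r_n·∇_{r_n} f) + ( (α²−α)γ(|r_1|²/T_1 + |r_n|²/T_n) + 2dαγ ) f; in particular the right-hand side does not depend on i. -/
open scoped BigOperators
open MeasureTheory

noncomputable section

namespace EP

/-! ### Auxiliary lemmas for the conjugation identity -/

section AuxConj

variable {d n : ℕ}

/-- directional derivative along a line. -/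
lemma fderiv_line {E : Type*} [NormedAddCommGroup E] [NormedSpace ℝ E]
    {g : E → ℝ} {x : E} (hg : DifferentiableAt ℝ g x) (v : E) :
    fderiv ℝ g x v = deriv (fun t : ℝ => g (x + t • v)) 0 := by
  have hline : HasDerivAt (fun t : ℝ => x + t • v) v 0 := by
    simpa using ((hasDerivAt_id (0 : ℝ)).smul_const v).const_add x
  have hF : HasFDerivAt g (fderiv ℝ g x) ((fun t : ℝ => x + t • v) 0) := by
    simpa using hg.hasFDerivAt
  exact ((hF.comp_hasDerivAt 0 hline).deriv).symm

lemma diff_dotp_p (k : ℕ) :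
    Differentiable ℝ (fun x : Phase d n => dotp (nth x.1 k) (nth x.1 k)) := by
  by_cases h : 1 ≤ k ∧ k ≤ n <;> simp [nth, dotp, h] <;> fun_prop

lemma diff_U1comp {U1 : Vec d → ℝ} (hU1 : ContDiff ℝ (⊤ : ℕ∞) U1) (k : ℕ) :
    Differentiable ℝ (fun x : Phase d n => U1 (nth x.2.1 k)) := by
  have hU := hU1.differentiable (by simp)
  by_cases h : 1 ≤ k ∧ k ≤ n <;> simp [nth, h] <;>
    first
    | exact hU.comp (by fun_prop)
    | fun_prop

lemma diff_U2comp {U2 : Vec d → ℝ} (hU2 : ContDiff ℝ (⊤ : ℕ∞) U2) (k l : ℕ) :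
    Differentiable ℝ (fun x : Phase d n => U2 (nth x.2.1 k - nth x.2.1 l)) := by
  have hU := hU2.differentiable (by simp)
  by_cases h : 1 ≤ k ∧ k ≤ n <;> by_cases h' : 1 ≤ l ∧ l ≤ n <;> simp [nth, h, h'] <;>
    first
    | exact hU.comp (by fun_prop)
    | fun_prop

lemma dvc {f : Phase d n → ℝ} (h : Differentiable ℝ f) (c : ℝ) :
    Differentiable ℝ (fun x => f x / c) := by
  simp only [div_eq_mul_inv]; exact h.mul_const _

lemma diff_locH {U1 U2 : Vec d → ℝ} (hU1 : ContDiff ℝ (⊤ : ℕ∞) U1)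
    (hU2 : ContDiff ℝ (⊤ : ℕ∞) U2) (k : ℕ) :
    Differentiable ℝ (fun x : Phase d n => locH d n U1 U2 k x) := by
  have h1 : Differentiable ℝ (fun x : Phase d n => dotp (nth x.1 k) (nth x.1 k) / 2) :=
    dvc (diff_dotp_p k) 2
  have h2 := diff_U1comp (n := n) hU1 k
  have h3 := fun a b => dvc (diff_U2comp (n := n) hU2 a b) 2
  unfold locH
  by_cases hx2 : 2 ≤ k <;> by_cases hxn : k < n <;>
    simp only [hx2, hxn, if_true, if_false, ite_true, ite_false, zero_div, add_zero] <;>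
    first
    | exact ((h1.add h2).add (h3 _ _)).add (h3 _ _)
    | exact (h1.add h2).add (h3 _ _)
    | exact h1.add h2

lemma diff_Rfun {U1 U2 : Vec d → ℝ} (hU1 : ContDiff ℝ (⊤ : ℕ∞) U1)
    (hU2 : ContDiff ℝ (⊤ : ℕ∞) U2) (T1 Tn : ℝ) (i : ℕ) :
    Differentiable ℝ (Rfun d n U1 U2 T1 Tn i) := by
  have hd1 : Differentiable ℝ (fun x : Phase d n => dotp x.2.2.1 x.2.2.1) := by
    unfold dotp; fun_prop
  have hd2 : Differentiable ℝ (fun x : Phase d n => dotp x.2.2.2 x.2.2.2) := by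
    unfold dotp; fun_prop
  have hs : ∀ s : Finset ℕ,
      Differentiable ℝ (fun x : Phase d n => ∑ k ∈ s, locH d n U1 U2 k x) :=
    fun s => Differentiable.fun_sum (fun k _ => diff_locH hU1 hU2 k)
  unfold Rfun
  exact ((((dvc hd1 2)).add (hs _)).const_mul _).add
    (((hs _).add ((dvc hd2 2))).const_mul _)

lemma add_smul_eR1 (x : Phase d n) (t : ℝ) (j : Fin d) :
    x + t • eR1 d n j = (x.1, x.2.1, x.2.2.1 + t • (Pi.single j (1:ℝ) : Vec d), x.2.2.2) := by
  simp [eR1, Prod.ext_iff]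

lemma add_smul_eRn (x : Phase d n) (t : ℝ) (j : Fin d) :
    x + t • eRn d n j = (x.1, x.2.1, x.2.2.1, x.2.2.2 + t • (Pi.single j (1:ℝ) : Vec d)) := by
  simp [eRn, Prod.ext_iff]

lemma dotp_line (a : Vec d) (t : ℝ) (j : Fin d) :
    dotp (a + t • (Pi.single j (1:ℝ) : Vec d)) (a + t • (Pi.single j (1:ℝ) : Vec d))
      = dotp a a + 2 * t * a j + t ^ 2 := by
  unfold dotp
  have key : ∀ j' : Fin d, (a + t • (Pi.single j (1:ℝ) : Vec d)) j' * (a + t • (Pi.single j (1:ℝ) : Vec d)) j'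
      = a j' * a j' + ((if j' = j then 2 * t * a j' else 0) + if j' = j then t ^ 2 else 0) := by
    intro j'
    by_cases h : j' = j <;> simp [Pi.single_apply, h] <;> ring
  rw [Finset.sum_congr rfl fun j' _ => key j']
  simp [Finset.sum_add_distrib]
  ring

lemma Rfun_line1 {U1 U2 : Vec d → ℝ} (T1 Tn : ℝ) (i : ℕ) (x : Phase d n) (t : ℝ) (j : Fin d) :
    Rfun d n U1 U2 T1 Tn i (x + t • eR1 d n j)
      = Rfun d n U1 U2 T1 Tn i x + (1 / T1) * (t * x.2.2.1 j + t ^ 2 / 2) := by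
  have key : Rfun d n U1 U2 T1 Tn i (x + t • eR1 d n j)
      = (1 / T1) * (dotp (x.2.2.1 + t • (Pi.single j (1:ℝ) : Vec d)) (x.2.2.1 + t • (Pi.single j (1:ℝ) : Vec d)) / 2
          + ∑ k ∈ Finset.Icc 1 i, locH d n U1 U2 k x)
        + (1 / Tn) * ((∑ k ∈ Finset.Icc (i + 1) n, locH d n U1 U2 k x)
          + dotp x.2.2.2 x.2.2.2 / 2) := by
    rw [add_smul_eR1]; rfl
  rw [key, dotp_line]
  unfold Rfun
  ring

lemma Rfun_linen {U1 U2 : Vec d → ℝ} (T1 Tn : ℝ) (i : ℕ) (x : Phase d n) (t : ℝ) (j : Fin d) :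
    Rfun d n U1 U2 T1 Tn i (x + t • eRn d n j)
      = Rfun d n U1 U2 T1 Tn i x + (1 / Tn) * (t * x.2.2.2 j + t ^ 2 / 2) := by
  have key : Rfun d n U1 U2 T1 Tn i (x + t • eRn d n j)
      = (1 / T1) * (dotp x.2.2.1 x.2.2.1 / 2
          + ∑ k ∈ Finset.Icc 1 i, locH d n U1 U2 k x)
        + (1 / Tn) * ((∑ k ∈ Finset.Icc (i + 1) n, locH d n U1 U2 k x)
          + dotp (x.2.2.2 + t • (Pi.single j (1:ℝ) : Vec d)) (x.2.2.2 + t • (Pi.single j (1:ℝ) : Vec d)) / 2) := by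
    rw [add_smul_eRn]; rfl
  rw [key, dotp_line]
  unfold Rfun
  ring

lemma deriv_quad (C c κ : ℝ) :
    deriv (fun t : ℝ => C + κ * (t * c + t ^ 2 / 2)) 0 = κ * c := by
  have hD : HasDerivAt (fun t : ℝ => C + κ * (t * c + t ^ 2 / 2))
      (κ * (1 * c + (↑2 * (0:ℝ) ^ 1) / 2)) 0 := by
    exact ((((hasDerivAt_id (0:ℝ)).mul_const c).add
      ((hasDerivAt_pow 2 (0:ℝ)).div_const 2)).const_mul κ).const_add C
  rw [hD.deriv]; norm_num

lemma fderiv_Rfun_r1 {U1 U2 : Vec d → ℝ} (hU1 : ContDiff ℝ (⊤ : ℕ∞) U1)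
    (hU2 : ContDiff ℝ (⊤ : ℕ∞) U2) (T1 Tn : ℝ) (i : ℕ) (x : Phase d n) (j : Fin d) :
    fderiv ℝ (Rfun d n U1 U2 T1 Tn i) x (eR1 d n j) = (1 / T1) * x.2.2.1 j := by
  rw [fderiv_line (diff_Rfun hU1 hU2 T1 Tn i x) (eR1 d n j)]
  have : (fun t : ℝ => Rfun d n U1 U2 T1 Tn i (x + t • eR1 d n j))
      = fun t => Rfun d n U1 U2 T1 Tn i x + (1 / T1) * (t * x.2.2.1 j + t ^ 2 / 2) :=
    funext fun t => Rfun_line1 T1 Tn i x t j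
  rw [this, deriv_quad]

lemma fderiv_Rfun_rn {U1 U2 : Vec d → ℝ} (hU1 : ContDiff ℝ (⊤ : ℕ∞) U1)
    (hU2 : ContDiff ℝ (⊤ : ℕ∞) U2) (T1 Tn : ℝ) (i : ℕ) (x : Phase d n) (j : Fin d) :
    fderiv ℝ (Rfun d n U1 U2 T1 Tn i) x (eRn d n j) = (1 / Tn) * x.2.2.2 j := by
  rw [fderiv_line (diff_Rfun hU1 hU2 T1 Tn i x) (eRn d n j)]
  have : (fun t : ℝ => Rfun d n U1 U2 T1 Tn i (x + t • eRn d n j))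
      = fun t => Rfun d n U1 U2 T1 Tn i x + (1 / Tn) * (t * x.2.2.2 j + t ^ 2 / 2) :=
    funext fun t => Rfun_linen T1 Tn i x t j
  rw [this, deriv_quad]

lemma fderiv_r1j (x : Phase d n) (j : Fin d) :
    fderiv ℝ (fun y : Phase d n => y.2.2.1 j) x (eR1 d n j) = 1 := by
  rw [fderiv_line (by fun_prop) (eR1 d n j)]
  have : (fun t : ℝ => (x + t • eR1 d n j).2.2.1 j) = fun t => x.2.2.1 j + t := by
    funext t; rw [add_smul_eR1]; simp
  rw [this]
  simpa using ((hasDerivAt_id (0:ℝ)).const_add (x.2.2.1 j)).deriv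

lemma fderiv_rnj (x : Phase d n) (j : Fin d) :
    fderiv ℝ (fun y : Phase d n => y.2.2.2 j) x (eRn d n j) = 1 := by
  rw [fderiv_line (by fun_prop) (eRn d n j)]
  have : (fun t : ℝ => (x + t • eRn d n j).2.2.2 j) = fun t => x.2.2.2 j + t := by
    funext t; rw [add_smul_eRn]; simp
  rw [this]
  simpa using ((hasDerivAt_id (0:ℝ)).const_add (x.2.2.2 j)).deriv

lemma conj_pd {g f c : Phase d n → ℝ} {v : Phase d n} {κ : ℝ}
    (hg : Differentiable ℝ g) (hf : ContDiff ℝ (⊤ : ℕ∞) f)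
    (hgv : ∀ y, fderiv ℝ g y v = κ * c y) (x : Phase d n) :
    fderiv ℝ (fun y => Real.exp (g y) * f y) x v
      = Real.exp (g x) * (κ * c x * f x + fderiv ℝ f x v) := by
  have hfd := hf.differentiable (by simp)
  have hE : DifferentiableAt ℝ (fun y => Real.exp (g y)) x := (hg x).exp
  rw [fderiv_fun_mul hE (hfd x)]
  simp only [ContinuousLinearMap.add_apply, ContinuousLinearMap.smul_apply, smul_eq_mul]
  rw [fderiv_exp (hg x)]
  simp only [ContinuousLinearMap.smul_apply, smul_eq_mul]
  rw [hgv x]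
  ring

lemma conj_pd2 {g f c : Phase d n → ℝ} {v : Phase d n} {κ : ℝ}
    (hg : Differentiable ℝ g) (hf : ContDiff ℝ (⊤ : ℕ∞) f)
    (hc : Differentiable ℝ c)
    (hgv : ∀ y, fderiv ℝ g y v = κ * c y)
    (hcv : ∀ y, fderiv ℝ c y v = 1) (x : Phase d n) :
    fderiv ℝ (fun y => fderiv ℝ (fun z => Real.exp (g z) * f z) y v) x v
      = Real.exp (g x) * (κ ^ 2 * (c x * c x) * f x
          + 2 * κ * (c x * fderiv ℝ f x v) + κ * f x
          + fderiv ℝ (fun y => fderiv ℝ f y v) x v) := by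
  have hfd := hf.differentiable (by simp)
  have hf1 : Differentiable ℝ (fun y => fderiv ℝ f y v) := by
    have h := (contDiff_infty_iff_fderiv.mp hf).2
    exact (h.differentiable (by simp)).clm_apply (differentiable_const v)
  have hrw : (fun y => fderiv ℝ (fun z => Real.exp (g z) * f z) y v)
      = fun y => Real.exp (g y) * (κ * c y * f y + fderiv ℝ f y v) :=
    funext fun y => conj_pd hg hf hgv y
  rw [hrw]
  have hc1 : Differentiable ℝ (fun y => κ * c y) := hc.const_mul κ
  have hG : Differentiable ℝ (fun y => κ * c y * f y + fderiv ℝ f y v) :=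
    ((hc1.mul hfd).add hf1)
  have hE : DifferentiableAt ℝ (fun y => Real.exp (g y)) x := (hg x).exp
  rw [fderiv_fun_mul hE (hG x)]
  simp only [ContinuousLinearMap.add_apply, ContinuousLinearMap.smul_apply, smul_eq_mul]
  rw [fderiv_exp (hg x)]
  simp only [ContinuousLinearMap.smul_apply, smul_eq_mul]
  rw [hgv x, fderiv_fun_add (f := fun y => κ * c y * f y) ((hc1.mul hfd) x) (hf1 x)]
  simp only [ContinuousLinearMap.add_apply]
  rw [fderiv_fun_mul (hc1 x) (hfd x)]
  simp only [ContinuousLinearMap.add_apply, ContinuousLinearMap.smul_apply, smul_eq_mul]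
  rw [fderiv_const_mul (hc x) κ]
  simp only [ContinuousLinearMap.smul_apply, smul_eq_mul]
  rw [hcv x]
  ring

end AuxConj

/-- conjugation of the second-order part:
`e^{-αR_i} L₀ e^{αR_i} = L₀ + 2αγ r·∇_r + ((α²-α)γ(|r₁|²/T₁+|rₙ|²/Tₙ) + 2dαγ)`,
independent of `i`. -/
theorem gen0_conjugation
    (d n : ℕ) (hd : 1 ≤ d) (hn : 2 ≤ n)
    (U1 U2 : Vec d → ℝ) (hU1 : ContDiff ℝ (⊤ : ℕ∞) U1) (hU2 : ContDiff ℝ (⊤ : ℕ∞) U2)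
    (ga lam T1 Tn : ℝ) (hga : 0 < ga) (hT1 : 0 < T1) (hTn : 0 < Tn)
    (al : ℝ) (i : ℕ) (hi : i ≤ n)
    (f : Phase d n → ℝ) (hf : ContDiff ℝ (⊤ : ℕ∞) f) :
    ∀ x : Phase d n,
      Real.exp (-(al * Rfun d n U1 U2 T1 Tn i x)) *
        gen0 d n ga T1 Tn (fun y => Real.exp (al * Rfun d n U1 U2 T1 Tn i y) * f y) x
      = gen0 d n ga T1 Tn f x
        + 2 * al * ga * ((∑ j, x.2.2.1 j * pd f (eR1 d n j) x)
                       + (∑ j, x.2.2.2 j * pd f (eRn d n j) x))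
        + ((al ^ 2 - al) * ga * (dotp x.2.2.1 x.2.2.1 / T1 + dotp x.2.2.2 x.2.2.2 / Tn)
            + 2 * (d : ℝ) * al * ga) * f x := by
  intro x
  have hRd : Differentiable ℝ (fun y => al * Rfun d n U1 U2 T1 Tn i y) :=
    (diff_Rfun hU1 hU2 T1 Tn i).const_mul al
  have hgv1 : ∀ (j : Fin d) (y : Phase d n),
      fderiv ℝ (fun y => al * Rfun d n U1 U2 T1 Tn i y) y (eR1 d n j)
        = (al / T1) * y.2.2.1 j := by
    intro j y
    rw [fderiv_const_mul (diff_Rfun hU1 hU2 T1 Tn i y) al]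
    simp only [ContinuousLinearMap.smul_apply, smul_eq_mul]
    rw [fderiv_Rfun_r1 hU1 hU2 T1 Tn i y j]; ring
  have hgvn : ∀ (j : Fin d) (y : Phase d n),
      fderiv ℝ (fun y => al * Rfun d n U1 U2 T1 Tn i y) y (eRn d n j)
        = (al / Tn) * y.2.2.2 j := by
    intro j y
    rw [fderiv_const_mul (diff_Rfun hU1 hU2 T1 Tn i y) al]
    simp only [ContinuousLinearMap.smul_apply, smul_eq_mul]
    rw [fderiv_Rfun_rn hU1 hU2 T1 Tn i y j]; ring
  have hB1 : ∀ j : Fin d, pd2 (fun y => Real.exp (al * Rfun d n U1 U2 T1 Tn i y) * f y) (eR1 d n j) x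
      = Real.exp (al * Rfun d n U1 U2 T1 Tn i x) * ((al / T1) ^ 2 * f x)
          * (x.2.2.1 j * x.2.2.1 j)
        + Real.exp (al * Rfun d n U1 U2 T1 Tn i x) * (2 * (al / T1))
          * (x.2.2.1 j * pd f (eR1 d n j) x)
        + Real.exp (al * Rfun d n U1 U2 T1 Tn i x) * ((al / T1) * f x)
        + Real.exp (al * Rfun d n U1 U2 T1 Tn i x) * pd2 f (eR1 d n j) x := by
    intro j
    have h : pd2 (fun y => Real.exp (al * Rfun d n U1 U2 T1 Tn i y) * f y) (eR1 d n j) x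
        = Real.exp (al * Rfun d n U1 U2 T1 Tn i x)
            * ((al / T1) ^ 2 * (x.2.2.1 j * x.2.2.1 j) * f x
              + 2 * (al / T1) * (x.2.2.1 j * pd f (eR1 d n j) x) + (al / T1) * f x
              + pd2 f (eR1 d n j) x) :=
      conj_pd2 (c := fun y : Phase d n => y.2.2.1 j) hRd hf (by fun_prop) (hgv1 j)
        (fun y => fderiv_r1j y j) x
    rw [h]; ring
  have hBn : ∀ j : Fin d, pd2 (fun y => Real.exp (al * Rfun d n U1 U2 T1 Tn i y) * f y) (eRn d n j) x
      = Real.exp (al * Rfun d n U1 U2 T1 Tn i x) * ((al / Tn) ^ 2 * f x)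
          * (x.2.2.2 j * x.2.2.2 j)
        + Real.exp (al * Rfun d n U1 U2 T1 Tn i x) * (2 * (al / Tn))
          * (x.2.2.2 j * pd f (eRn d n j) x)
        + Real.exp (al * Rfun d n U1 U2 T1 Tn i x) * ((al / Tn) * f x)
        + Real.exp (al * Rfun d n U1 U2 T1 Tn i x) * pd2 f (eRn d n j) x := by
    intro j
    have h : pd2 (fun y => Real.exp (al * Rfun d n U1 U2 T1 Tn i y) * f y) (eRn d n j) x
        = Real.exp (al * Rfun d n U1 U2 T1 Tn i x)
            * ((al / Tn) ^ 2 * (x.2.2.2 j * x.2.2.2 j) * f x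
              + 2 * (al / Tn) * (x.2.2.2 j * pd f (eRn d n j) x) + (al / Tn) * f x
              + pd2 f (eRn d n j) x) :=
      conj_pd2 (c := fun y : Phase d n => y.2.2.2 j) hRd hf (by fun_prop) (hgvn j)
        (fun y => fderiv_rnj y j) x
    rw [h]; ring
  have hA1 : ∀ j : Fin d, x.2.2.1 j * pd (fun y => Real.exp (al * Rfun d n U1 U2 T1 Tn i y) * f y) (eR1 d n j) x
      = Real.exp (al * Rfun d n U1 U2 T1 Tn i x) * ((al / T1) * f x)
          * (x.2.2.1 j * x.2.2.1 j)
        + Real.exp (al * Rfun d n U1 U2 T1 Tn i x) * (x.2.2.1 j * pd f (eR1 d n j) x) := by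
    intro j
    have h : pd (fun y => Real.exp (al * Rfun d n U1 U2 T1 Tn i y) * f y) (eR1 d n j) x
        = Real.exp (al * Rfun d n U1 U2 T1 Tn i x)
            * ((al / T1) * x.2.2.1 j * f x + pd f (eR1 d n j) x) :=
      conj_pd (c := fun y : Phase d n => y.2.2.1 j) hRd hf (hgv1 j) x
    rw [h]; ring
  have hAn : ∀ j : Fin d, x.2.2.2 j * pd (fun y => Real.exp (al * Rfun d n U1 U2 T1 Tn i y) * f y) (eRn d n j) x
      = Real.exp (al * Rfun d n U1 U2 T1 Tn i x) * ((al / Tn) * f x)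
          * (x.2.2.2 j * x.2.2.2 j)
        + Real.exp (al * Rfun d n U1 U2 T1 Tn i x) * (x.2.2.2 j * pd f (eRn d n j) x) := by
    intro j
    have h : pd (fun y => Real.exp (al * Rfun d n U1 U2 T1 Tn i y) * f y) (eRn d n j) x
        = Real.exp (al * Rfun d n U1 U2 T1 Tn i x)
            * ((al / Tn) * x.2.2.2 j * f x + pd f (eRn d n j) x) :=
      conj_pd (c := fun y : Phase d n => y.2.2.2 j) hRd hf (hgvn j) x
    rw [h]; ring
  have h1 : ∑ j, pd2 (fun y => Real.exp (al * Rfun d n U1 U2 T1 Tn i y) * f y) (eR1 d n j) x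
      = Real.exp (al * Rfun d n U1 U2 T1 Tn i x) * ((al / T1) ^ 2 * f x)
          * (∑ j, x.2.2.1 j * x.2.2.1 j)
        + Real.exp (al * Rfun d n U1 U2 T1 Tn i x) * (2 * (al / T1))
          * (∑ j, x.2.2.1 j * pd f (eR1 d n j) x)
        + (d : ℝ) * (Real.exp (al * Rfun d n U1 U2 T1 Tn i x) * ((al / T1) * f x))
        + Real.exp (al * Rfun d n U1 U2 T1 Tn i x) * ∑ j, pd2 f (eR1 d n j) x := by
    rw [Finset.sum_congr rfl fun j _ => hB1 j]
    simp only [Finset.sum_add_distrib, ← Finset.mul_sum, Finset.sum_const,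
      Finset.card_univ, Fintype.card_fin, nsmul_eq_mul]
    ring
  have h2 : ∑ j, pd2 (fun y => Real.exp (al * Rfun d n U1 U2 T1 Tn i y) * f y) (eRn d n j) x
      = Real.exp (al * Rfun d n U1 U2 T1 Tn i x) * ((al / Tn) ^ 2 * f x)
          * (∑ j, x.2.2.2 j * x.2.2.2 j)
        + Real.exp (al * Rfun d n U1 U2 T1 Tn i x) * (2 * (al / Tn))
          * (∑ j, x.2.2.2 j * pd f (eRn d n j) x)
        + (d : ℝ) * (Real.exp (al * Rfun d n U1 U2 T1 Tn i x) * ((al / Tn) * f x))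
        + Real.exp (al * Rfun d n U1 U2 T1 Tn i x) * ∑ j, pd2 f (eRn d n j) x := by
    rw [Finset.sum_congr rfl fun j _ => hBn j]
    simp only [Finset.sum_add_distrib, ← Finset.mul_sum, Finset.sum_const,
      Finset.card_univ, Fintype.card_fin, nsmul_eq_mul]
    ring
  have h3 : ∑ j, x.2.2.1 j * pd (fun y => Real.exp (al * Rfun d n U1 U2 T1 Tn i y) * f y) (eR1 d n j) x
      = Real.exp (al * Rfun d n U1 U2 T1 Tn i x) * ((al / T1) * f x)
          * (∑ j, x.2.2.1 j * x.2.2.1 j)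
        + Real.exp (al * Rfun d n U1 U2 T1 Tn i x)
          * (∑ j, x.2.2.1 j * pd f (eR1 d n j) x) := by
    rw [Finset.sum_congr rfl fun j _ => hA1 j]
    simp only [Finset.sum_add_distrib, ← Finset.mul_sum]
  have h4 : ∑ j, x.2.2.2 j * pd (fun y => Real.exp (al * Rfun d n U1 U2 T1 Tn i y) * f y) (eRn d n j) x
      = Real.exp (al * Rfun d n U1 U2 T1 Tn i x) * ((al / Tn) * f x)
          * (∑ j, x.2.2.2 j * x.2.2.2 j)
        + Real.exp (al * Rfun d n U1 U2 T1 Tn i x)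
          * (∑ j, x.2.2.2 j * pd f (eRn d n j) x) := by
    rw [Finset.sum_congr rfl fun j _ => hAn j]
    simp only [Finset.sum_add_distrib, ← Finset.mul_sum]
  simp only [gen0, dotp]
  rw [h1, h2, h3, h4]
  rw [Real.exp_neg, inv_mul_eq_iff_eq_mul₀ (Real.exp_ne_zero _)]
  field_simp
  ring
end EP
end
end
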